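/- arXiv:1709.01397 — 2 statements merged into one kernel-verified Lean document; each statement's English description precedes it below -/
import Mathlib

section
/- Let ℝ³ carry a norm ‖·‖ whose norm function is differentiable at every nonzero point. Let F : ℝ² → ℝ³ be a differentiable map, x₀ ∈ ℝ², and let T ⊆ ℝ³ be the range of the differential dF_{x₀}. Let a ∈ ℝ³ with a ≠ F(x₀), and define the distance function D_a : ℝ² → ℝ by D_a(x) = ‖F(x) − a‖. Then x₀ is a critical point of D_a (i.e., the differential of D_a at x₀ vanishes) if and only if the vector F(x₀) − a is Birkhoff orthogonal to T, that is, ‖F(x₀) − a + w‖ ≥ ‖F(x₀) − a‖ for every w ∈ T. -/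
open Module

section BirkhoffOrthogonal

variable {E : Type*} [NormedAddCommGroup E] [NormedSpace ℝ E]

def BirkhoffOrthogonal (v : E) (P : Submodule ℝ E) : Prop :=
  ∀ w ∈ P, ‖v‖ ≤ ‖v + w‖

/-- `t ↦ ‖v + t • w‖` is minimal at `t = 0`. -/
theorem BirkhoffOrthogonal.fderiv_norm_apply_eq_zero {v w : E} {P : Submodule ℝ E}
    (hvP : BirkhoffOrthogonal v P) (hw : w ∈ P) (hv : DifferentiableAt ℝ (‖·‖) v) :
    fderiv ℝ (‖·‖) v w = 0 := by
  have hline : HasDerivAt (fun t : ℝ => v + t • w) w 0 := by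
    simpa using ((hasDerivAt_id (0 : ℝ)).smul_const w).const_add v
  have hderiv : HasDerivAt (fun t : ℝ => ‖v + t • w‖) (fderiv ℝ (‖·‖) v w) 0 :=
    hv.hasFDerivAt.comp_hasDerivAt_of_eq 0 hline (by simp)
  have hmin : IsLocalMin (fun t : ℝ => ‖v + t • w‖) 0 :=
    Filter.Eventually.of_forall fun t => by simpa using hvP _ (P.smul_mem t hw)
  exact hmin.hasDerivAt_eq_zero hderiv

/-- The derivative `f` of the norm at `v` has `‖f‖ ≤ 1` and `f v = ‖v‖`, so
`‖v‖ = f (v + w) ≤ ‖v + w‖` whenever `f w = 0`. -/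
theorem birkhoffOrthogonal_of_fderiv_norm_apply_eq_zero {v : E} {P : Submodule ℝ E}
    (hv : DifferentiableAt ℝ (‖·‖) v) (hP : ∀ w ∈ P, fderiv ℝ (‖·‖) v w = 0) :
    BirkhoffOrthogonal v P := by
  intro w hw
  set f := fderiv ℝ (‖·‖) v
  have hf : ‖f‖ ≤ 1 := by
    simpa using norm_fderiv_le_of_lipschitz ℝ (lipschitzWith_one_norm (E := E)) (x₀ := v)
  calc ‖v‖ = f (v + w) := by rw [map_add, hP w hw, add_zero, hv.fderiv_norm_self]
    _ ≤ ‖f‖ * ‖v + w‖ := (le_abs_self _).trans (f.le_opNorm _)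
    _ ≤ ‖v + w‖ := mul_le_of_le_one_left (norm_nonneg _) hf

theorem birkhoffOrthogonal_iff_le_ker_fderiv_norm {v : E} {P : Submodule ℝ E}
    (hv : DifferentiableAt ℝ (‖·‖) v) :
    BirkhoffOrthogonal v P ↔ P ≤ LinearMap.ker (fderiv ℝ (‖·‖) v : E →ₗ[ℝ] ℝ) :=
  ⟨fun hvP _ hw => hvP.fderiv_norm_apply_eq_zero hw hv,
    birkhoffOrthogonal_of_fderiv_norm_apply_eq_zero hv⟩

end BirkhoffOrthogonal

theorem critical_point_of_distance_iff_birkhoff_orthogonal_general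
    (X : Type*) [NormedAddCommGroup X] [NormedSpace ℝ X]
    (hnorm : ∀ v : X, v ≠ 0 → DifferentiableAt ℝ (fun w : X => ‖w‖) v)
    (F : EuclideanSpace ℝ (Fin 2) → X)
    (x₀ : EuclideanSpace ℝ (Fin 2))
    (hF : Differentiable ℝ F)
    (a : X) (ha : a ≠ F x₀) :
    fderiv ℝ (fun x => ‖F x - a‖) x₀ = 0 ↔
      ∀ w ∈ LinearMap.range (fderiv ℝ F x₀ : EuclideanSpace ℝ (Fin 2) →ₗ[ℝ] X), ‖F x₀ - a + w‖ ≥ ‖F x₀ - a‖ := by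
  have hv : DifferentiableAt ℝ (‖·‖) (F x₀ - a) := hnorm _ (sub_ne_zero.2 ha.symm)
  have hchain : fderiv ℝ (fun x => ‖F x - a‖) x₀
      = (fderiv ℝ (‖·‖) (F x₀ - a)).comp (fderiv ℝ F x₀) :=
    (hv.hasFDerivAt.comp x₀ ((hF x₀).hasFDerivAt.sub_const a)).fderiv
  change _ ↔ BirkhoffOrthogonal _ _
  rw [hchain, birkhoffOrthogonal_iff_le_ker_fderiv_norm hv, LinearMap.range_le_ker_iff,
    ← ContinuousLinearMap.toLinearMap_comp, ← ContinuousLinearMap.toLinearMap_zero,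
    ContinuousLinearMap.coe_inj]

/-- Section 3 of the paper: let `X` be a three-dimensional real normed space whose norm
is differentiable at every nonzero point, `F : ℝ² → X` a differentiable map, `x₀ ∈ ℝ²`,
`T` the range of the differential of `F` at `x₀`, and `a ≠ F x₀`.  Then `x₀` is a
critical point of the distance function `D_a x = ‖F x - a‖` if and only if
`F x₀ - a` is Birkhoff orthogonal to `T`. -/
theorem critical_point_of_distance_iff_birkhoff_orthogonal
    (X : Type*) [NormedAddCommGroup X] [NormedSpace ℝ X] [FiniteDimensional ℝ X]
    (hdim : finrank ℝ X = 3)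
    (hnorm : ∀ v : X, v ≠ 0 → DifferentiableAt ℝ (fun w : X => ‖w‖) v)
    (F : EuclideanSpace ℝ (Fin 2) → X)
    (x₀ : EuclideanSpace ℝ (Fin 2))
    (hF : Differentiable ℝ F)
    (a : X) (ha : a ≠ F x₀) :
    fderiv ℝ (fun x => ‖F x - a‖) x₀ = 0 ↔
      ∀ w ∈ LinearMap.range (fderiv ℝ F x₀ : EuclideanSpace ℝ (Fin 2) →ₗ[ℝ] X), ‖F x₀ - a + w‖ ≥ ‖F x₀ - a‖ :=
  critical_point_of_distance_iff_birkhoff_orthogonal_general X hnorm F x₀ hF a ha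
end

section
/- Let g : ℝ → ℝ be a twice differentiable function with g(θ) > 0 for all θ, satisfying the Ermakov–Pinney equation g''(θ) + g(θ) = g(θ)⁻³ for all θ ∈ ℝ. Then there exist real constants A, B, C with A·C − B² = 1 such that g(θ)² = A·cos²θ + 2B·cosθ·sinθ + C·sin²θ for all θ; in particular g is π-periodic, g² is the restriction to the unit circle directions of a positive definite quadratic form of determinant 1 (so g is the Euclidean support function of an origin-centered ellipse enclosing area π), and the only constant such solution is g ≡ 1. (This is the analytic core of Theorem 4.1: the Euclidean support function g of the unit circle of a normed plane whose Birkhoff normal field makes it a Blaschke immersion is a positive π-periodic solution of g'' + g = g⁻³, which forces the unit circle to be an ellipse, i.e., the plane to be Euclidean.) -/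
open Real

/-!
The Ermakov invariant `I = g'² + g² + g⁻²` is a first integral of `g'' + g = g⁻³`, and along
a solution `h = g²` satisfies the linear equation `h'' + 4h = 2I`. Hence `h - I/2` is a harmonic
oscillator of frequency `2`, which gives Pinney's formula
`g² = A cos²θ + 2B cosθ sinθ + C sin²θ` with `A = g(0)²`, `B = g(0) g'(0)`,
`C = g'(0)² + g(0)⁻²`, so that `AC - B² = 1`.
-/

section Harmonic

variable {ω : ℝ} {y y' : ℝ → ℝ}

theorem harmonic_energy_eq (hy : ∀ t, HasDerivAt y (y' t) t)
    (hy' : ∀ t, HasDerivAt y' (-(ω ^ 2 * y t)) t) (t : ℝ) :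
    y' t ^ 2 + ω ^ 2 * y t ^ 2 = y' 0 ^ 2 + ω ^ 2 * y 0 ^ 2 := by
  have hE : ∀ s, HasDerivAt (fun s => y' s ^ 2 + ω ^ 2 * y s ^ 2) 0 s := fun s => by
    refine (((hy' s).pow 2).add (((hy s).pow 2).const_mul (ω ^ 2))).congr_deriv ?_
    ring
  exact is_const_of_deriv_eq_zero (fun s => (hE s).differentiableAt) (fun s => (hE s).deriv) t 0

theorem eq_zero_of_harmonic (hω : ω ≠ 0) (hy : ∀ t, HasDerivAt y (y' t) t)
    (hy' : ∀ t, HasDerivAt y' (-(ω ^ 2 * y t)) t) (h₀ : y 0 = 0) (h₀' : y' 0 = 0) (t : ℝ) :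
    y t = 0 := by
  have hE := harmonic_energy_eq hy hy' t
  rw [h₀, h₀'] at hE
  have hωy : ω ^ 2 * y t ^ 2 = 0 := by
    nlinarith [sq_nonneg (y' t), sq_nonneg ω, sq_nonneg (y t)]
  simpa [hω] using hωy

theorem eq_cos_add_sin_of_harmonic (hω : ω ≠ 0) (hy : ∀ t, HasDerivAt y (y' t) t)
    (hy' : ∀ t, HasDerivAt y' (-(ω ^ 2 * y t)) t) (t : ℝ) :
    y t = y 0 * cos (ω * t) + y' 0 / ω * sin (ω * t) := by
  have hωt : ∀ s : ℝ, HasDerivAt (fun s => ω * s) ω s := fun s => by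
    simpa using (hasDerivAt_id s).const_mul ω
  set z := fun s => y s - (y 0 * cos (ω * s) + y' 0 / ω * sin (ω * s))
  set z' := fun s => y' s - (-(y 0 * ω) * sin (ω * s) + y' 0 * cos (ω * s))
  have hz : ∀ s, HasDerivAt z (z' s) s := fun s => by
    refine ((hy s).sub ((((hωt s).cos).const_mul (y 0)).add
      (((hωt s).sin).const_mul (y' 0 / ω)))).congr_deriv ?_
    field_simp
    ring
  have hz' : ∀ s, HasDerivAt z' (-(ω ^ 2 * z s)) s := fun s => by
    refine ((hy' s).sub ((((hωt s).sin).const_mul (-(y 0 * ω))).add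
      (((hωt s).cos).const_mul (y' 0)))).congr_deriv ?_
    simp only [z]
    field_simp
    ring
  exact sub_eq_zero.mp (eq_zero_of_harmonic hω hz hz' (by simp [z]) (by simp [z']) t)

end Harmonic

section ErmakovPinney

noncomputable def ermakovInvariant (g : ℝ → ℝ) (θ : ℝ) : ℝ :=
  deriv g θ ^ 2 + g θ ^ 2 + (g θ ^ 2)⁻¹

variable {g : ℝ → ℝ}

theorem hasDerivAt_ermakovInvariant (hg : Differentiable ℝ g)
    (hg' : Differentiable ℝ (deriv g)) (hne : ∀ θ, g θ ≠ 0)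
    (heq : ∀ θ, deriv (deriv g) θ + g θ = 1 / g θ ^ 3) (θ : ℝ) :
    HasDerivAt (ermakovInvariant g) 0 θ := by
  have hg'' : deriv (deriv g) θ = 1 / g θ ^ 3 - g θ := by linarith [heq θ]
  refine ((((hg' θ).hasDerivAt.pow 2).add ((hg θ).hasDerivAt.pow 2)).add
    (((hg θ).hasDerivAt.pow 2).inv (pow_ne_zero 2 (hne θ)))).congr_deriv ?_
  rw [hg'', Pi.pow_apply]
  field_simp [hne θ]
  ring

theorem ermakovInvariant_eq (hg : Differentiable ℝ g) (hg' : Differentiable ℝ (deriv g))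
    (hne : ∀ θ, g θ ≠ 0) (heq : ∀ θ, deriv (deriv g) θ + g θ = 1 / g θ ^ 3) (θ : ℝ) :
    ermakovInvariant g θ = ermakovInvariant g 0 :=
  have hI := hasDerivAt_ermakovInvariant hg hg' hne heq
  is_const_of_deriv_eq_zero (fun s => (hI s).differentiableAt) (fun s => (hI s).deriv) θ 0

theorem hasDerivAt_two_mul_mul_deriv (hg : Differentiable ℝ g)
    (hg' : Differentiable ℝ (deriv g)) (hne : ∀ θ, g θ ≠ 0)
    (heq : ∀ θ, deriv (deriv g) θ + g θ = 1 / g θ ^ 3) (θ : ℝ) :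
    HasDerivAt (fun t => 2 * g t * deriv g t)
      (-(2 ^ 2 * (g θ ^ 2 - ermakovInvariant g 0 / 2))) θ := by
  have hg'' : deriv (deriv g) θ = 1 / g θ ^ 3 - g θ := by linarith [heq θ]
  refine (((hg θ).hasDerivAt.const_mul 2).mul (hg' θ).hasDerivAt).congr_deriv ?_
  rw [← ermakovInvariant_eq hg hg' hne heq θ, ermakovInvariant, hg'']
  field_simp [hne θ]
  ring

theorem sq_eq_of_ermakovPinney (hg : Differentiable ℝ g) (hg' : Differentiable ℝ (deriv g))
    (hne : ∀ θ, g θ ≠ 0) (heq : ∀ θ, deriv (deriv g) θ + g θ = 1 / g θ ^ 3) (θ : ℝ) :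
    g θ ^ 2 = g 0 ^ 2 * cos θ ^ 2 + 2 * (g 0 * deriv g 0) * cos θ * sin θ +
      (deriv g 0 ^ 2 + (g 0 ^ 2)⁻¹) * sin θ ^ 2 := by
  have hy : ∀ t, HasDerivAt (fun t => g t ^ 2 - ermakovInvariant g 0 / 2)
      (2 * g t * deriv g t) t := fun t => by
    refine (((hg t).hasDerivAt.pow 2).sub_const (ermakovInvariant g 0 / 2)).congr_deriv ?_
    ring
  have h := eq_cos_add_sin_of_harmonic two_ne_zero hy
    (hasDerivAt_two_mul_mul_deriv hg hg' hne heq) θ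
  simp only [ermakovInvariant, cos_two_mul, sin_two_mul] at h
  linear_combination h - (deriv g 0 ^ 2 + (g 0 ^ 2)⁻¹) * sin_sq_add_cos_sq θ

theorem eq_one_of_eq_one_div_cube {c : ℝ} (hc : 0 < c) (h : c = 1 / c ^ 3) : c = 1 := by
  have hc4 : c ^ 4 = 1 := by
    field_simp at h
    linarith
  exact (pow_eq_one_iff_of_nonneg hc.le four_ne_zero).mp hc4

end ErmakovPinney

/-- The analytic core of Theorem 4.1: a positive twice differentiable solution of the
Ermakov–Pinney equation `g'' + g = g⁻³` satisfies
`g(θ)² = A cos²θ + 2B cosθ sinθ + C sin²θ` for constants with `A·C - B² = 1`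
(so `g²` comes from a positive definite quadratic form of determinant 1, and `g` is the
Euclidean support function of an origin-centered ellipse enclosing area `π`); in
particular `g` is `π`-periodic, and the only constant such solution is `g ≡ 1`. -/
theorem ermakov_pinney_solutions (g : ℝ → ℝ)
    (hg : Differentiable ℝ g) (hg' : Differentiable ℝ (deriv g))
    (hpos : ∀ θ : ℝ, g θ > 0)
    (heq : ∀ θ : ℝ, deriv (deriv g) θ + g θ = 1 / (g θ) ^ 3) :
    ∃ A B C : ℝ, A * C - B ^ 2 = 1 ∧
      (∀ θ : ℝ, (g θ) ^ 2 =
        A * Real.cos θ ^ 2 + 2 * B * Real.cos θ * Real.sin θ + C * Real.sin θ ^ 2) ∧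
      (∀ θ : ℝ, g (θ + π) = g θ) ∧
      ((∃ c : ℝ, ∀ θ : ℝ, g θ = c) → ∀ θ : ℝ, g θ = 1) := by
  have hne : ∀ θ, g θ ≠ 0 := fun θ => (hpos θ).ne'
  have hsq := sq_eq_of_ermakovPinney hg hg' hne heq
  refine ⟨_, _, _, ?_, hsq, fun θ => ?_, ?_⟩
  · field_simp [hne 0]
    ring
  · rw [← pow_left_inj₀ (hpos _).le (hpos θ).le two_ne_zero, hsq (θ + π), hsq θ,
      cos_add_pi, sin_add_pi]
    ring
  · rintro ⟨c, hc⟩ θ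
    have hconst : g = fun _ => c := funext hc
    have h0 := heq 0
    simp only [hconst, deriv_const', zero_add] at h0
    rw [hc θ]
    exact eq_one_of_eq_one_div_cube (hc 0 ▸ hpos 0) h0
end
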